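/- If R is almost Gorenstein and the h-polynomial of I is symmetric, then length_R((R:Λ)/I^ν) ≤ r − 1, with equality if and only if Λ = Λ**. -/

import Mathlib

open Submodule IsLocalRing

noncomputable section

/-- Length of an `R`-module, defined as the Krull dimension of its submodule lattice. -/
def modLength (R : Type*) [Ring R] (M : Type*) [AddCommGroup M] [Module R M] : WithBot ℕ∞ :=
  Order.krullDim (Submodule R M)

/-- Length of the quotient `I / J` for submodules `J ≤ I` of an ambient module. -/
def qlen (R : Type*) [CommRing R] {K : Type*} [AddCommGroup K] [Module R K]
    (I J : Submodule R K) : WithBot ℕ∞ :=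
  modLength R (I ⧸ (J.comap I.subtype))

/-- The image of an ideal of `R` in `K`, viewed as an `R`-submodule of `K`. -/
def idl (R : Type*) [CommRing R] (K : Type*) [CommRing K] [Algebra R K] (I : Ideal R) :
    Submodule R K :=
  Submodule.map (Algebra.linearMap R K) I

/-- The blowing-up `Λ(I) = ⋃ₙ (Iⁿ : Iⁿ)` of `R` along `I`, inside `K`. -/
def blowup (R : Type*) [CommRing R] (K : Type*) [CommRing K] [Algebra R K] (I : Ideal R) :
    Submodule R K :=
  ⨆ n : ℕ, (idl R K I ^ n) / (idl R K I ^ n)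

/-- The set of values of the nonzero elements of a fractional ideal. -/
def vvals {R : Type*} [CommRing R] {K : Type*} [CommRing K] [Algebra R K]
    (v : K → WithTop ℤ) (J : Submodule R K) : Set (WithTop ℤ) :=
  v '' {y | y ∈ J ∧ y ≠ 0}

namespace StmtAux

open Order

variable {α : Type*} [Lattice α]

/-- Length of the interval `[B, A]`. -/
noncomputable def ilen (B A : α) : WithBot ℕ∞ := Order.krullDim (Set.Icc B A)

lemma ilen_nonneg {B A : α} (h : B ≤ A) : 0 ≤ ilen B A :=
  have : Nonempty (Set.Icc B A) := ⟨⟨B, le_refl _, h⟩⟩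
  Order.krullDim_nonneg

lemma ilen_congr {B A B' A' : α} (e : Set.Icc B A ≃o Set.Icc B' A') : ilen B A = ilen B' A' :=
  Order.krullDim_eq_of_orderIso e

lemma ilen_self (A : α) : ilen A A = 0 := by
  have : Unique (Set.Icc A A) :=
    ⟨⟨⟨A, le_refl _, le_refl _⟩⟩, fun x => Subtype.ext (le_antisymm x.2.2 x.2.1)⟩
  exact Order.krullDim_eq_zero_of_unique

/-- restrict an `LTSeries` to a set containing all its members -/
def LTSeries.restrict (s : LTSeries α) (S : Set α) (hs : ∀ a ∈ s, a ∈ S) : LTSeries ↥S where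
  length := s.length
  toFun := fun i => ⟨s.toFun i, hs _ ⟨i, rfl⟩⟩
  step := fun i => by exact_mod_cast s.step i

@[simp] lemma LTSeries.restrict_length (s : LTSeries α) (S : Set α) (hs : ∀ a ∈ s, a ∈ S) :
    (LTSeries.restrict s S hs).length = s.length := rfl

lemma one_le_ilen {B A : α} (h : B < A) : 1 ≤ ilen B A := by
  let p : LTSeries ↥(Set.Icc B A) :=
    (RelSeries.singleton _ (⟨B, le_refl _, h.le⟩ : Set.Icc B A)).snoc
      ⟨A, h.le, le_refl _⟩ (by
        rw [RelSeries.last_singleton]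
        exact (Subtype.mk_lt_mk.mpr h : (⟨B, le_refl _, h.le⟩ : Set.Icc B A) < ⟨A, h.le, le_refl _⟩))
  have h1 := Order.LTSeries.length_le_krullDim p
  have hl : p.length = 1 := rfl
  rw [hl] at h1
  exact_mod_cast h1

lemma ilen_eq_zero_iff {B A : α} (h : B ≤ A) : ilen B A = 0 ↔ B = A := by
  constructor
  · intro h0
    by_contra hne
    have := one_le_ilen (lt_of_le_of_ne h hne)
    rw [h0] at this
    exact absurd this (by norm_num)
  · rintro rfl; exact ilen_self _


lemma ilen_le_one {B A : α} (h : ∀ x, B ≤ x → x ≤ A → x = B ∨ x = A) : ilen B A ≤ 1 := by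
  rw [ilen, Order.krullDim]
  apply iSup_le
  intro p
  suffices hle : p.length ≤ 1 by exact_mod_cast hle
  by_contra hc
  push_neg at hc
  have h2 : 2 ≤ p.length := hc
  have l01 : p.toFun ⟨0, by omega⟩ < p.toFun ⟨1, by omega⟩ := p.strictMono (by
    rw [Fin.mk_lt_mk]; omega)
  have l12 : p.toFun ⟨1, by omega⟩ < p.toFun ⟨2, by omega⟩ := p.strictMono (by
    rw [Fin.mk_lt_mk]; omega)
  set x0 := p.toFun ⟨0, by omega⟩
  set x1 := p.toFun ⟨1, by omega⟩
  set x2 := p.toFun ⟨2, by omega⟩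
  rcases h x1.1 x1.2.1 x1.2.2 with h1 | h1
  · have hlt : (x0 : α) < (x1 : α) := Subtype.coe_lt_coe.mpr l01
    rw [h1] at hlt
    exact lt_irrefl _ (lt_of_lt_of_le hlt x0.2.1)
  · have hlt : (x1 : α) < (x2 : α) := Subtype.coe_lt_coe.mpr l12
    rw [h1] at hlt
    exact lt_irrefl _ (lt_of_lt_of_le hlt x2.2.2)

section Modular

variable [IsModularLattice α]

private lemma eq_of_inf_sup {y z C : α} (hyz : y ≤ z) (hinf : y ⊓ C = z ⊓ C)
    (hsup : y ⊔ C = z ⊔ C) : y = z := by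
  have hzle : z ≤ y ⊔ C := hsup ▸ le_sup_left
  have h1 : (y ⊔ C) ⊓ z = y ⊔ C ⊓ z := sup_inf_assoc_of_le C hyz
  have h2 : (y ⊔ C) ⊓ z = z := inf_eq_right.mpr hzle
  have h3 : C ⊓ z = C ⊓ y := by rw [inf_comm C z, inf_comm C y, hinf]
  have : z = y ⊔ C ⊓ y := by rw [← h3, ← h1, h2]
  rw [inf_comm, sup_eq_left.mpr inf_le_left] at this
  exact this.symm

private lemma chain_split {B C A : α} (hBC : B ≤ C) (hCA : C ≤ A) :
    ∀ (n : ℕ) (x : Fin (n + 1) → α), StrictMono x → (∀ i, x i ∈ Set.Icc B A) →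
      ∃ s t : LTSeries α, (∀ a ∈ s, a ∈ Set.Icc B C) ∧ (∀ a ∈ t, a ∈ Set.Icc C A) ∧
        s.last ≤ x (Fin.last n) ⊓ C ∧ t.last ≤ x (Fin.last n) ⊔ C ∧
        n ≤ s.length + t.length := by
  intro n
  induction n with
  | zero =>
    intro x hx hmem
    refine ⟨RelSeries.singleton _ (x (Fin.last 0) ⊓ C), RelSeries.singleton _ (x (Fin.last 0) ⊔ C),
      ?_, ?_, ?_, ?_, ?_⟩
    · intro a ha
      obtain ⟨i, rfl⟩ := RelSeries.mem_def.mp ha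
      exact ⟨le_inf (hmem _).1 hBC, inf_le_right⟩
    · intro a ha
      obtain ⟨i, rfl⟩ := RelSeries.mem_def.mp ha
      exact ⟨le_sup_right, sup_le (hmem _).2 hCA⟩
    · rw [RelSeries.last_singleton]
    · rw [RelSeries.last_singleton]
    · simp
  | succ n ih =>
    intro x hx hmem
    obtain ⟨s, t, hs, ht, hsl, htl, hlen⟩ := ih (fun i => x i.castSucc)
      (hx.comp Fin.strictMono_castSucc) (fun i => hmem _)
    set y := x (Fin.last n).castSucc with hy
    set z := x (Fin.last (n + 1)) with hz
    have hyz : y < z := hx (Fin.castSucc_lt_last _)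
    have hinfle : y ⊓ C ≤ z ⊓ C := inf_le_inf_right C hyz.le
    have hsuple : y ⊔ C ≤ z ⊔ C := sup_le_sup_right hyz.le C
    rcases eq_or_lt_of_le hinfle with hcase | hcase
    · have hsup : y ⊔ C < z ⊔ C := by
        rcases eq_or_lt_of_le hsuple with h' | h'
        · exact absurd (eq_of_inf_sup hyz.le hcase h') hyz.ne
        · exact h'
      refine ⟨s, t.snoc (z ⊔ C) (lt_of_le_of_lt htl hsup), hs, ?_, ?_, ?_, ?_⟩
      · intro a ha
        rw [RelSeries.mem_snoc] at ha
        rcases ha with ha | rfl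
        · exact ht a ha
        · exact ⟨le_sup_right, sup_le (hmem _).2 hCA⟩
      · exact hsl.trans (inf_le_inf_right C hyz.le)
      · rw [RelSeries.last_snoc]
      · rw [RelSeries.snoc_length]; omega
    · refine ⟨s.snoc (z ⊓ C) (lt_of_le_of_lt hsl hcase), t, ?_, ht, ?_, ?_, ?_⟩
      · intro a ha
        rw [RelSeries.mem_snoc] at ha
        rcases ha with ha | rfl
        · exact hs a ha
        · exact ⟨le_inf (hmem _).1 hBC, inf_le_right⟩
      · rw [RelSeries.last_snoc]
      · exact htl.trans (sup_le_sup_right hyz.le C)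
      · rw [RelSeries.snoc_length]; omega

lemma ilen_le_add {B C A : α} (hBC : B ≤ C) (hCA : C ≤ A) :
    ilen B A ≤ ilen B C + ilen C A := by
  rw [ilen, Order.krullDim]
  apply iSup_le
  intro p
  obtain ⟨s, t, hs, ht, -, -, hlen⟩ := chain_split hBC hCA p.length
    (fun i => (p.toFun i : α))
    (fun i j hij => Subtype.coe_lt_coe.mpr (p.strictMono hij))
    (fun i => (p.toFun i).2)
  have h1 := Order.LTSeries.length_le_krullDim (LTSeries.restrict s _ hs)
  have h2 := Order.LTSeries.length_le_krullDim (LTSeries.restrict t _ ht)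
  calc (p.length : WithBot ℕ∞) ≤ ((s.length + t.length : ℕ) : WithBot ℕ∞) := by
        exact_mod_cast hlen
    _ = (s.length : WithBot ℕ∞) + (t.length : ℕ) := by push_cast; ring
    _ ≤ ilen B C + ilen C A := add_le_add h1 h2

lemma add_ilen_le {B C A : α} (hBC : B ≤ C) (hCA : C ≤ A) :
    ilen B C + ilen C A ≤ ilen B A := by
  have n1 : Nonempty (Set.Icc B C) := ⟨⟨B, le_refl _, hBC⟩⟩
  have n2 : Nonempty (Set.Icc C A) := ⟨⟨C, le_refl _, hCA⟩⟩
  have n3 : Nonempty (Set.Icc B A) := ⟨⟨B, le_refl _, hBC.trans hCA⟩⟩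
  rw [ilen, ilen, ilen, Order.krullDim_eq_iSup_length, Order.krullDim_eq_iSup_length,
    Order.krullDim_eq_iSup_length, ← WithBot.coe_add]
  refine WithBot.coe_le_coe.mpr (ENat.iSup_add_iSup_le ?_)
  intro p q
  let f : ↥(Set.Icc B C) → ↥(Set.Icc B A) := fun u => ⟨u.1, u.2.1, u.2.2.trans hCA⟩
  let g : ↥(Set.Icc C A) → ↥(Set.Icc B A) := fun u => ⟨u.1, hBC.trans u.2.1, u.2.2⟩
  have hf : StrictMono f := fun u v h => Subtype.mk_lt_mk.mpr h
  have hg : StrictMono g := fun u v h => Subtype.mk_lt_mk.mpr h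
  let p2 := p.map f hf
  let q2 := q.map g hg
  have h1 : p2.last ≤ q2.head := by
    have e1 : p2.last = f p.last := LTSeries.last_map p f hf
    have e2 : q2.head = g q.head := LTSeries.head_map q g hg
    rw [e1, e2]
    exact Subtype.mk_le_mk.mpr ((p.last.2.2).trans (q.head.2.1))
  rcases eq_or_lt_of_le h1 with he | hlt
  · have hb := Order.LTSeries.length_le_krullDim (p2.smash q2 he)
    rw [Order.krullDim_eq_iSup_length] at hb
    have hlen : (p2.smash q2 he).length = p.length + q.length := rfl
    rw [hlen] at hb
    exact_mod_cast hb
  · have hb := Order.LTSeries.length_le_krullDim (p2.append q2 hlt)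
    rw [Order.krullDim_eq_iSup_length] at hb
    have hlen : (p2.append q2 hlt).length = p.length + q.length + 1 := rfl
    rw [hlen] at hb
    have : ((p.length + q.length : ℕ) : WithBot ℕ∞) ≤ ((p.length + q.length + 1 : ℕ) : WithBot ℕ∞) := by
      exact_mod_cast Nat.le_succ _
    exact_mod_cast this.trans hb

lemma ilen_add {B C A : α} (hBC : B ≤ C) (hCA : C ≤ A) :
    ilen B A = ilen B C + ilen C A :=
  le_antisymm (ilen_le_add hBC hCA) (add_ilen_le hBC hCA)

end Modular


section SubmoduleUtil

/-- interval congruence under an order isomorphism -/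
def iccCongr {β γ : Type*} [Preorder β] [Preorder γ] (e : β ≃o γ) (B A : β) :
    Set.Icc B A ≃o Set.Icc (e B) (e A) where
  toFun x := ⟨e x.1, e.monotone x.2.1, e.monotone x.2.2⟩
  invFun y := ⟨e.symm y.1, by
    constructor
    · have := e.symm.monotone y.2.1; rwa [e.symm_apply_apply] at this
    · have := e.symm.monotone y.2.2; rwa [e.symm_apply_apply] at this⟩
  left_inv x := Subtype.ext (e.symm_apply_apply x.1)
  right_inv y := Subtype.ext (e.apply_symm_apply y.1)
  map_rel_iff' := by
    intro x y
    exact ⟨fun h => e.le_iff_le.mp h, fun h => e.monotone h⟩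

lemma ilen_orderIso {β : Type*} [Lattice β] (e : β ≃o β) (B A : β) :
    ilen (e B) (e A) = ilen B A :=
  (ilen_congr (iccCongr e B A)).symm

variable {R : Type*} [CommRing R] {K : Type*} [Field K] [Algebra R K]

lemma qlen_eq (A B : Submodule R K) : qlen R A B = ilen (B ⊓ A) A := by
  have hinj : Function.Injective A.subtype := Subtype.coe_injective
  refine Order.krullDim_eq_of_orderIso ((Submodule.comapMkQRelIso (B.comap A.subtype)).trans ?_)
  exact {
    toFun := fun p => ⟨Submodule.map A.subtype p.1, by
      constructor
      · rw [show B ⊓ A = Submodule.map A.subtype (B.comap A.subtype) by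
          rw [Submodule.map_comap_subtype]; rw [inf_comm]]
        exact Submodule.map_mono p.2
      · exact Submodule.map_subtype_le A p.1⟩
    invFun := fun q => ⟨Submodule.comap A.subtype q.1, by
      have h1 : B ⊓ A ≤ q.1 := q.2.1
      have h2 := Submodule.comap_mono (f := A.subtype) h1
      rwa [Submodule.comap_inf, Submodule.comap_subtype_self, inf_top_eq] at h2⟩
    left_inv := fun p => Subtype.ext (Submodule.comap_map_eq_of_injective hinj p.1)
    right_inv := fun q => Subtype.ext (by
      show Submodule.map A.subtype (Submodule.comap A.subtype q.1) = q.1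
      rw [Submodule.map_comap_subtype, inf_eq_right.mpr q.2.2])
    map_rel_iff' := by
      intro p q
      exact Submodule.map_le_map_iff_of_injective hinj _ _ }

lemma qlen_eq_of_le {A B : Submodule R K} (h : B ≤ A) : qlen R A B = ilen B A := by
  rw [qlen_eq, inf_eq_left.mpr h]

/-- scaling a submodule by an element of `K` -/
def sc (u : K) (P : Submodule R K) : Submodule R K := Submodule.span R {u} * P

lemma sc_sc (u v : K) (P : Submodule R K) : sc u (sc v P) = sc (u * v) P := by
  rw [sc, sc, sc, ← mul_assoc, Submodule.span_mul_span, Set.singleton_mul_singleton]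

lemma sc_one_left (P : Submodule R K) : sc 1 P = P := by
  rw [sc, ← Submodule.one_eq_span, one_mul]

lemma sc_mono (u : K) {P Q : Submodule R K} (h : P ≤ Q) : sc u P ≤ sc u Q :=
  mul_le_mul' le_rfl h

/-- scaling as an order isomorphism -/
def scIso (u : K) (hu : u ≠ 0) : Submodule R K ≃o Submodule R K where
  toFun := sc u
  invFun := sc u⁻¹
  left_inv P := by rw [sc_sc, inv_mul_cancel₀ hu, sc_one_left]
  right_inv P := by rw [sc_sc, mul_inv_cancel₀ hu, sc_one_left]
  map_rel_iff' := by
    intro P Q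
    constructor
    · intro h
      have h2 := sc_mono (u⁻¹) (show sc u P ≤ sc u Q from h)
      rwa [sc_sc, inv_mul_cancel₀ hu, sc_one_left, sc_sc, inv_mul_cancel₀ hu, sc_one_left] at h2
    · exact fun h => sc_mono u h

lemma ilen_sc {u : K} (hu : u ≠ 0) (B A : Submodule R K) :
    ilen (sc u B) (sc u A) = ilen B A :=
  ilen_orderIso (scIso u hu) B A

lemma mem_sc_of_mem {u p : K} {P : Submodule R K} (hp : p ∈ P) : u * p ∈ sc u P :=
  Submodule.mul_mem_mul (Submodule.mem_span_singleton_self u) hp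

lemma sc_le_iff {u : K} {P Q : Submodule R K} : sc u P ≤ Q ↔ ∀ p ∈ P, u * p ∈ Q := by
  constructor
  · intro h p hp; exact h (mem_sc_of_mem hp)
  · intro h
    refine Submodule.mul_le.mpr (fun m hm p hp => ?_)
    obtain ⟨c, rfl⟩ := Submodule.mem_span_singleton.mp hm
    rw [smul_mul_assoc]
    exact Submodule.smul_mem _ _ (h p hp)

lemma mem_sc_iff {u z : K} (hu : u ≠ 0) {P : Submodule R K} : z ∈ sc u P ↔ u⁻¹ * z ∈ P := by
  constructor
  · intro h
    have h2 := mem_sc_of_mem (u := u⁻¹) h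
    rwa [sc_sc, inv_mul_cancel₀ hu, sc_one_left] at h2
  · intro h
    have h2 := mem_sc_of_mem (u := u) h
    rwa [← mul_assoc, mul_inv_cancel₀ hu, one_mul] at h2

lemma div_antitone (ω : Submodule R K) {P Q : Submodule R K} (h : P ≤ Q) : ω / Q ≤ ω / P :=
  fun _ hz => Submodule.mem_div_iff_forall_mul_mem.mpr
    fun y hy => Submodule.mem_div_iff_forall_mul_mem.mp hz y (h hy)

lemma one_mem_one : (1 : K) ∈ (1 : Submodule R K) := Submodule.one_le.mp le_rfl

lemma div_one_eq (Q : Submodule R K) : Q / 1 = Q := by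
  ext z
  rw [Submodule.mem_div_iff_forall_mul_mem]
  constructor
  · intro h
    have := h 1 one_mem_one
    rwa [mul_one] at this
  · intro hz y hy
    obtain ⟨a, rfl⟩ := Submodule.mem_one.mp hy
    rw [mul_comm, ← Algebra.smul_def]
    exact Submodule.smul_mem _ _ hz

lemma div_sc (Q P : Submodule R K) {u : K} (hu : u ≠ 0) : Q / sc u P = sc u⁻¹ (Q / P) := by
  apply le_antisymm
  · intro z hz
    have h1 : u * z ∈ Q / P := by
      rw [Submodule.mem_div_iff_forall_mul_mem]
      intro p hp
      have := Submodule.mem_div_iff_forall_mul_mem.mp hz (u * p) (mem_sc_of_mem hp)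
      rwa [show z * (u * p) = u * z * p by ring] at this
    have h2 := mem_sc_of_mem (u := u⁻¹) h1
    rwa [← mul_assoc, inv_mul_cancel₀ hu, one_mul] at h2
  · rw [sc_le_iff]
    intro w hw
    rw [Submodule.mem_div_iff_forall_mul_mem]
    intro y hy
    rw [mem_sc_iff hu] at hy
    have := Submodule.mem_div_iff_forall_mul_mem.mp hw _ hy
    rwa [show u⁻¹ * w * y = w * (u⁻¹ * y) by ring]

lemma fg_of_le [IsNoetherianRing R] {A B : Submodule R K} (hA : A.FG) (h : B ≤ A) : B.FG := by
  have : IsNoetherian R ↥A := isNoetherian_of_fg_of_noetherian A hA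
  have h1 : (B.comap A.subtype).FG := IsNoetherian.noetherian _
  have h2 := h1.map A.subtype
  rwa [Submodule.map_comap_subtype, inf_eq_right.mpr h] at h2

lemma exists_den [IsDomain R] [IsFractionRing R K] (P : Submodule R K) (hP : P.FG) :
    ∃ c : R, c ≠ 0 ∧ ∀ z ∈ P, algebraMap R K c * z ∈ (1 : Submodule R K) := by
  obtain ⟨s, rfl⟩ := hP
  obtain ⟨b, hb⟩ := IsLocalization.exist_integer_multiples (nonZeroDivisors R) s id
  refine ⟨(b : R), nonZeroDivisors.coe_ne_zero b, ?_⟩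
  have : (Submodule.span R (s : Set K)) ≤
      (1 : Submodule R K).comap (LinearMap.mulLeft R (algebraMap R K (b : R))) := by
    rw [Submodule.span_le]
    intro i hi
    have h2 := hb i hi
    simp only [id] at h2
    obtain ⟨a, ha⟩ := h2
    simp only [SetLike.mem_coe, Submodule.mem_comap, LinearMap.mulLeft_apply,
      Submodule.mem_one]
    exact ⟨a, by rw [ha, Algebra.smul_def]⟩
  intro z hz
  exact this hz

lemma algebraMap_ne_zero [IsDomain R] [IsFractionRing R K] {c : R} (hc : c ≠ 0) :
    algebraMap R K c ≠ 0 := by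
  intro h
  exact hc (IsFractionRing.injective R K (by rw [h, map_zero]))

lemma div_ne_bot [IsDomain R] [IsFractionRing R K] {ω P : Submodule R K} (hω1 : 1 ≤ ω)
    (hP : P.FG) : ω / P ≠ ⊥ := by
  obtain ⟨c, hc0, hc⟩ := exists_den P hP
  have hmem : algebraMap R K c ∈ ω / P := by
    rw [Submodule.mem_div_iff_forall_mul_mem]
    exact fun y hy => hω1 (hc y hy)
  intro hbot
  rw [hbot, Submodule.mem_bot] at hmem
  exact algebraMap_ne_zero hc0 hmem

lemma div_fg [IsNoetherianRing R] {ω P : Submodule R K} (hω : ω.FG) {b : K} (hb : b ∈ P)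
    (hb0 : b ≠ 0) : (ω / P).FG := by
  refine fg_of_le ((Submodule.fg_span_singleton (b⁻¹)).mul hω) ?_
  intro z hz
  have h1 : z * b ∈ ω := Submodule.mem_div_iff_forall_mul_mem.mp hz b hb
  have h2 := mem_sc_of_mem (u := b⁻¹) h1
  rwa [show b⁻¹ * (z * b) = z by field_simp] at h2

end SubmoduleUtil

section Duality

variable {R : Type*} [CommRing R] [IsNoetherianRing R] [IsDomain R]
  {K : Type*} [Field K] [Algebra R K] [IsFractionRing R K]
  {ω : Submodule R K}

lemma ilen_dual (hω1 : 1 ≤ ω) (hωfg : ω.FG)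
    (hdual : ∀ J : Submodule R K, J ≠ ⊥ → J.FG → ω / (ω / J) = J)
    {B A : Submodule R K} (hBA : B ≤ A) (hB : B ≠ ⊥) (hA : A.FG) :
    ilen B A = ilen (ω / A) (ω / B) := by
  have hBne : ∀ P : Submodule R K, B ≤ P → P ≠ ⊥ :=
    fun P h hP => hB (le_bot_iff.mp (hP ▸ h))
  obtain ⟨b, hbB, hb0⟩ := (Submodule.ne_bot_iff _).mp hB
  have hωB : (ω / B).FG := div_fg hωfg hbB hb0
  have key : ∀ P, B ≤ P → P ≤ A → ω / (ω / P) = P :=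
    fun P h1 h2 => hdual P (hBne P h1) (fg_of_le hA h2)
  have key2 : ∀ Q, ω / A ≤ Q → Q ≤ ω / B → ω / (ω / Q) = Q := fun Q h1 h2 =>
    hdual Q (fun hQ => div_ne_bot hω1 hA (le_bot_iff.mp (hQ ▸ h1))) (fg_of_le hωB h2)
  let e : ↥(Set.Icc B A) ≃o (↥(Set.Icc (ω / A) (ω / B)))ᵒᵈ :=
    { toFun := fun P => OrderDual.toDual
        ⟨ω / P.1, div_antitone ω P.2.2, div_antitone ω P.2.1⟩
      invFun := fun Q => ⟨ω / (OrderDual.ofDual Q).1, by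
        constructor
        · have h2 := div_antitone ω (OrderDual.ofDual Q).2.2
          rwa [hdual B hB (fg_of_le hA hBA)] at h2
        · have h2 := div_antitone ω (OrderDual.ofDual Q).2.1
          rwa [hdual A (hBne A hBA) hA] at h2⟩
      left_inv := fun P => Subtype.ext (key P.1 P.2.1 P.2.2)
      right_inv := fun Q => congrArg OrderDual.toDual
        (Subtype.ext (key2 (OrderDual.ofDual Q).1 (OrderDual.ofDual Q).2.1
          (OrderDual.ofDual Q).2.2))
      map_rel_iff' := by
        intro P Q
        constructor
        · intro hle
          have h2 : ω / Q.1 ≤ ω / P.1 := hle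
          have h3 := div_antitone ω h2
          rwa [key P.1 P.2.1 P.2.2, key Q.1 Q.2.1 Q.2.2] at h3
        · intro h
          exact div_antitone ω h }
  have h1 : ilen B A = Order.krullDim (↥(Set.Icc (ω / A) (ω / B)))ᵒᵈ :=
    Order.krullDim_eq_of_orderIso e
  rw [h1, Order.krullDim_orderDual]
  rfl

lemma one_div_eq_dual_mul (hωω : ω / ω = 1) (P : Submodule R K) :
    (1 : Submodule R K) / P = ω / (ω * P) := by
  apply le_antisymm
  · intro z hz
    rw [Submodule.mem_div_iff_forall_mul_mem]
    intro y hy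
    have hle : ω * P ≤ Submodule.comap (LinearMap.mulLeft R z) ω := by
      refine Submodule.mul_le.mpr (fun o ho p hp => ?_)
      have h1 : z * p ∈ (1 : Submodule R K) :=
        Submodule.mem_div_iff_forall_mul_mem.mp hz p hp
      obtain ⟨a, ha⟩ := Submodule.mem_one.mp h1
      simp only [Submodule.mem_comap, LinearMap.mulLeft_apply]
      rw [show z * (o * p) = (z * p) * o by ring, ← ha, ← Algebra.smul_def]
      exact Submodule.smul_mem _ _ ho
    exact hle hy
  · intro z hz
    rw [Submodule.mem_div_iff_forall_mul_mem]
    intro p hp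
    have h1 : z * p ∈ ω / ω := by
      rw [Submodule.mem_div_iff_forall_mul_mem]
      intro o ho
      have h2 : o * p ∈ ω * P := Submodule.mul_mem_mul ho hp
      have h3 := Submodule.mem_div_iff_forall_mul_mem.mp hz _ h2
      rwa [show z * p * o = z * (o * p) by ring]
    rw [hωω] at h1
    exact h1

end Duality

lemma wb_cancel {x y : WithBot ℕ∞} (hx : 0 ≤ x) (hy : 0 ≤ y) (n : ℕ)
    (h : x + (n : WithBot ℕ∞) = y + (n : WithBot ℕ∞)) : x = y := by
  lift x to ℕ∞ using (by rintro rfl; simp at hx)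
  lift y to ℕ∞ using (by rintro rfl; simp at hy)
  have h2 : x + (n : ℕ∞) = y + (n : ℕ∞) := by exact_mod_cast h
  exact_mod_cast WithTop.add_right_cancel (ENat.coe_ne_top n) h2

lemma wb_nat_nonneg (n : ℕ) : (0 : WithBot ℕ∞) ≤ (n : WithBot ℕ∞) := by
  exact_mod_cast Nat.zero_le n

lemma wb_decompose {c : WithBot ℕ∞} (hc : 0 ≤ c) {a b : ℕ}
    (h : (b : WithBot ℕ∞) = (a : WithBot ℕ∞) + c) :
    ∃ d : ℕ, c = (d : WithBot ℕ∞) ∧ b = a + d := by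
  lift c to ℕ∞ using (by rintro rfl; simp at hc)
  have h2 : (b : ℕ∞) = (a : ℕ∞) + c := by exact_mod_cast h
  have hct : c ≠ ⊤ := by
    rintro rfl
    rw [add_top] at h2
    exact (ENat.coe_ne_top b) h2
  lift c to ℕ using hct
  refine ⟨c, by norm_cast, by exact_mod_cast h2⟩

section IdlLemmas

variable {R : Type*} [CommRing R] {K : Type*} [Field K] [Algebra R K]

lemma one_fg : (1 : Submodule R K).FG := by
  rw [Submodule.one_eq_span]; exact Submodule.fg_span_singleton 1

lemma mem_idl {I : Ideal R} {z : K} : z ∈ idl R K I ↔ ∃ a ∈ I, algebraMap R K a = z := by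
  simp [idl, Submodule.mem_map, Algebra.linearMap_apply]

lemma idl_le_one (I : Ideal R) : idl R K I ≤ 1 := by
  intro z hz
  obtain ⟨a, -, rfl⟩ := mem_idl.mp hz
  exact Submodule.mem_one.mpr ⟨a, rfl⟩

lemma idl_mul (I J : Ideal R) : idl R K (I * J) = idl R K I * idl R K J :=
  Submodule.map_mul I J (Algebra.ofId R K)

lemma idl_pow (I : Ideal R) (n : ℕ) : idl R K (I ^ n) = idl R K I ^ n :=
  Submodule.map_pow (Algebra.ofId R K) n (M := I)

lemma idl_span_singleton (x : R) :
    idl R K (Ideal.span {x}) = Submodule.span R {algebraMap R K x} := by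
  rw [idl, Ideal.span, Submodule.map_span, Set.image_singleton]
  rfl

lemma pow_le_one_of_le_one {M : Submodule R K} (h : M ≤ 1) (n : ℕ) : M ^ n ≤ 1 := by
  induction n with
  | zero => rw [pow_zero]
  | succ n ih =>
    rw [pow_succ]
    have := mul_le_mul' ih (le_refl M)
    calc M ^ n * M ≤ 1 * M := this
      _ = M := one_mul M
      _ ≤ 1 := h

lemma pow_succ_le {M : Submodule R K} (h : M ≤ 1) (n : ℕ) : M ^ (n + 1) ≤ M ^ n := by
  rw [pow_succ]
  calc M ^ n * M ≤ M ^ n * 1 := mul_le_mul' le_rfl h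
    _ = M ^ n := mul_one _

variable [IsDomain R] [IsFractionRing R K]

lemma idl_inj {I J : Ideal R} (h : idl R K I = idl R K J) : I = J := by
  have hinj : Function.Injective (Algebra.linearMap R K) := fun a b hab =>
    IsFractionRing.injective R K (by simpa [Algebra.linearMap_apply] using hab)
  exact Submodule.map_injective_of_injective hinj h

lemma idl_ne_bot {I : Ideal R} (h : I ≠ ⊥) : idl R K I ≠ ⊥ := by
  intro hb
  apply h
  apply idl_inj (K := K)
  rw [hb]
  exact (Submodule.map_bot _).symm

end IdlLemmas

end StmtAux

open StmtAux

theorem stmt_16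
    (R : Type*) [CommRing R] [IsDomain R] [IsLocalRing R] [IsNoetherianRing R]
    (K : Type*) [Field K] [Algebra R K] [IsFractionRing R K]
    [IsDiscreteValuationRing (integralClosure R K)]
    [Module.Finite R (integralClosure R K)]
    (hres : ∀ y : integralClosure R K, ∃ a : R,
      y - algebraMap R (integralClosure R K) a ∈ maximalIdeal (integralClosure R K))
    (hkinf : Infinite (ResidueField R))
    (I : Ideal R) (hI0 : I ≠ ⊥) (hIrad : I.radical = maximalIdeal R)
    (hInp : ¬ I.IsPrincipal)
    (x : R) (hxI : x ∈ I)
    (ν : ℕ) (hν : IsLeast {n : ℕ | ∀ k ≥ n, I ^ (k + 1) = Ideal.span {x} * I ^ k} ν)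
    (ω : Submodule R K) (hω1 : 1 ≤ ω) (hω2 : ω < ((integralClosure R K).toSubmodule))
    (hωω : ω / ω = 1)
    (hωdual : ∀ J : Submodule R K, J ≠ ⊥ → J.FG → ω / (ω / J) = J)
    (hAG : idl R K (maximalIdeal R) * ω = idl R K (maximalIdeal R))
    (r : ℕ) (hrty : (r : WithBot ℕ∞) = qlen R ((1 : Submodule R K) / idl R K (maximalIdeal R)) 1)
    (ℓ₁ : ℕ) (hℓ₁ : (ℓ₁ : WithBot ℕ∞) = qlen R ((1 : Submodule R K) / (blowup R K I)) ((idl R K I) ^ ν))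
    (L : ℕ → ℕ) (hL : ∀ i : ℕ, (L i : WithBot ℕ∞) = qlen R ((idl R K I) ^ i) ((idl R K I) ^ (i + 1)))
    (h : ℕ → ℤ) (hh0 : h 0 = L 0) (hhi : ∀ i, 1 ≤ i → h i = (L i : ℤ) - L (i - 1))
    (hsym : ∀ i ≤ ν, h i = h (ν - i)) :
    (ℓ₁ : ℤ) ≤ (r : ℤ) - 1 ∧
      ((ℓ₁ : ℤ) = (r : ℤ) - 1 ↔ (blowup R K I) = (1 : Submodule R K) / ((1 : Submodule R K) / (blowup R K I))) := by
  -- notation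
  set w : K := algebraMap R K x with hwdef
  set Iv : Submodule R K := idl R K I with hIvdef
  set J : Submodule R K := Iv ^ ν with hJdef
  set mm : Submodule R K := idl R K (maximalIdeal R) with hmmdef
  set Λ : Submodule R K := blowup R K I with hΛdef
  -- basic nonvanishing
  have hx0 : x ≠ 0 := by
    rintro rfl
    have hstep := hν.1 ν le_rfl
    rw [show Ideal.span ({0} : Set R) = ⊥ from Ideal.span_singleton_eq_bot.mpr rfl,
      bot_mul] at hstep
    obtain ⟨a, haI, ha0⟩ := (Submodule.ne_bot_iff I).mp hI0
    have : a ^ (ν + 1) ∈ I ^ (ν + 1) := Ideal.pow_mem_pow haI _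
    rw [hstep, Ideal.mem_bot] at this
    exact pow_ne_zero _ ha0 this
  have hw0 : w ≠ 0 := algebraMap_ne_zero hx0
  have hwn0 : ∀ k : ℕ, w ^ k ≠ 0 := fun k => pow_ne_zero _ hw0
  -- membership and inclusion basics
  have hIv1 : Iv ≤ 1 := idl_le_one I
  have hJ1 : J ≤ 1 := pow_le_one_of_le_one hIv1 ν
  have hwIv : w ∈ Iv := by rw [hIvdef]; exact Submodule.mem_map_of_mem hxI
  have hwνJ : w ^ ν ∈ J := Submodule.pow_mem_pow _ hwIv ν
  have hJbot : J ≠ ⊥ := (Submodule.ne_bot_iff J).mpr ⟨w ^ ν, hwνJ, hwn0 ν⟩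
  have hIfg : I.FG := IsNoetherian.noetherian I
  have hIvfg : Iv.FG := Submodule.FG.map _ hIfg
  have hJfg : J.FG := hIvfg.pow ν
  -- ω finite generation
  have hωfg : ω.FG := by
    have htop : (⊤ : Submodule R ↥(integralClosure R K)).FG := Module.finite_def.mp ‹_›
    have hmap := htop.map (Subalgebra.val (integralClosure R K)).toLinearMap
    have heq : Submodule.map (Subalgebra.val (integralClosure R K)).toLinearMap ⊤ =
        Subalgebra.toSubmodule (integralClosure R K) := by
      ext z
      simp only [Submodule.mem_map, Submodule.mem_top, true_and, Subalgebra.mem_toSubmodule]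
      constructor
      · rintro ⟨y, rfl⟩; exact y.2
      · intro hz; exact ⟨⟨z, hz⟩, rfl⟩
    rw [heq] at hmap
    exact fg_of_le hmap hω2.le
  have hωbot : ω ≠ ⊥ := (Submodule.ne_bot_iff ω).mpr ⟨1, hω1 one_mem_one, one_ne_zero⟩
  -- stable powers
  have hstep : ∀ k ≥ ν, Iv ^ (k + 1) = sc w (Iv ^ k) := by
    intro k hk
    have := hν.1 k hk
    have h2 : idl R K (I ^ (k+1)) = idl R K (Ideal.span {x} * I ^ k) := by rw [this]
    rw [idl_pow, idl_mul, idl_pow, idl_span_singleton] at h2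
    exact h2
  have hstable : ∀ k : ℕ, Iv ^ (ν + k) = sc (w ^ k) J := by
    intro k
    induction k with
    | zero => rw [Nat.add_zero, pow_zero, sc_one_left]
    | succ k ih =>
      have h2 := hstep (ν + k) (by omega)
      rw [show ν + (k+1) = (ν + k) + 1 by omega, h2, ih, sc_sc]
      rw [show w * w ^ k = w ^ (k+1) by rw [pow_succ, mul_comm]]
  have hJJ : J * J = sc (w ^ ν) J := by
    rw [hJdef, ← pow_add, show ν + ν = ν + ν from rfl, hstable ν]
  -- the blowup is J / J = (w^ν)⁻¹ J
  have hJdivJ : J / J = sc ((w ^ ν)⁻¹) J := by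
    apply le_antisymm
    · intro z hz
      have h1 : z * w ^ ν ∈ J := Submodule.mem_div_iff_forall_mul_mem.mp hz _ hwνJ
      have h2 := mem_sc_of_mem (u := (w ^ ν)⁻¹) h1
      rwa [show (w ^ ν)⁻¹ * (z * w ^ ν) = z by field_simp] at h2
    · rw [sc_le_iff]
      intro j hj
      rw [Submodule.mem_div_iff_forall_mul_mem]
      intro j' hj'
      have h1 : j * j' ∈ sc (w ^ ν) J := by rw [← hJJ]; exact Submodule.mul_mem_mul hj hj'
      rw [mem_sc_iff (hwn0 ν)] at h1
      rwa [show (w ^ ν)⁻¹ * j * j' = (w ^ ν)⁻¹ * (j * j') by ring]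
  have hΛeq : Λ = J / J := by
    rw [hΛdef, blowup]
    apply le_antisymm
    · apply iSup_le
      intro n
      rcases le_or_gt n ν with hn | hn
      · intro z hz
        rw [Submodule.mem_div_iff_forall_mul_mem]
        intro j hj
        have hJsplit : Iv ^ n * Iv ^ (ν - n) = J := by rw [← pow_add]; congr 1; omega
        have hle : Iv ^ n * Iv ^ (ν - n) ≤ Submodule.comap (LinearMap.mulLeft R z) J := by
          refine Submodule.mul_le.mpr (fun a ha b hb => ?_)
          simp only [Submodule.mem_comap, LinearMap.mulLeft_apply]
          have h1 : z * a ∈ Iv ^ n := Submodule.mem_div_iff_forall_mul_mem.mp hz a ha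
          rw [show z * (a * b) = (z * a) * b by ring, ← hJsplit]
          exact Submodule.mul_mem_mul h1 hb
        rw [hJsplit] at hle
        exact hle hj
      · intro z hz
        rw [Submodule.mem_div_iff_forall_mul_mem]
        intro j hj
        have hn2 : Iv ^ n = sc (w ^ (n - ν)) J := by
          have := hstable (n - ν)
          rwa [show ν + (n - ν) = n by omega] at this
        have h1 : w ^ (n - ν) * j ∈ Iv ^ n := by rw [hn2]; exact mem_sc_of_mem hj
        have h2 : z * (w ^ (n - ν) * j) ∈ Iv ^ n :=
          Submodule.mem_div_iff_forall_mul_mem.mp hz _ h1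
        rw [hn2, mem_sc_iff (hwn0 (n - ν))] at h2
        rwa [show (w ^ (n-ν))⁻¹ * (z * (w ^ (n-ν) * j)) = z * j by field_simp] at h2
    · exact le_iSup (fun n => (Iv ^ n) / (Iv ^ n)) ν
  have hΛsc : Λ = sc ((w ^ ν)⁻¹) J := by rw [hΛeq, hJdivJ]
  have hΛfg : Λ.FG := by rw [hΛsc]; exact (Submodule.fg_span_singleton _).mul hJfg
  have h1Λ : (1 : Submodule R K) ≤ Λ := by
    rw [hΛeq, Submodule.one_le, Submodule.mem_div_iff_forall_mul_mem]
    intro y hy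
    rwa [one_mul]
  have hΛbot : Λ ≠ ⊥ := fun hb => by
    have := h1Λ one_mem_one
    rw [hb, Submodule.mem_bot] at this
    exact one_ne_zero this
  have hΛmul : ∀ z ∈ Λ, ∀ z' ∈ Λ, z * z' ∈ Λ := by
    intro z hz z' hz'
    rw [hΛeq] at hz hz' ⊢
    rw [Submodule.mem_div_iff_forall_mul_mem]
    intro j hj
    have h1 : z' * j ∈ J := Submodule.mem_div_iff_forall_mul_mem.mp hz' j hj
    have h2 := Submodule.mem_div_iff_forall_mul_mem.mp hz _ h1
    rwa [show z * (z' * j) = z * z' * j by ring] at h2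
  -- scaled identities
  have hscJ : sc (w ^ ν) Λ = J := by
    rw [hΛsc, sc_sc, mul_inv_cancel₀ (hwn0 ν), sc_one_left]
  have hdivΛ : (1 : Submodule R K) / Λ = sc (w ^ ν) ((1 : Submodule R K) / J) := by
    rw [hΛsc, div_sc _ _ (inv_ne_zero (hwn0 ν)), inv_inv]
  have hωdivΛ : ω / Λ = sc (w ^ ν) (ω / J) := by
    rw [hΛsc, div_sc _ _ (inv_ne_zero (hwn0 ν)), inv_inv]

  -- maximal ideal facts
  have hmbot : maximalIdeal R ≠ ⊥ := by
    intro hm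
    apply hI0
    have h1 : I ≤ I.radical := Ideal.le_radical
    rw [hIrad, hm] at h1
    exact le_bot_iff.mp h1
  have hmmbot : mm ≠ ⊥ := idl_ne_bot hmbot
  have hmm1 : mm ≤ 1 := idl_le_one _
  have h1mm : (1 : K) ∉ mm := by
    intro h1m
    obtain ⟨a, ham, ha⟩ := mem_idl.mp h1m
    have ha1 : a = 1 := IsFractionRing.injective R K (by rw [ha, map_one])
    subst ha1
    exact (maximalIdeal.isMaximal R).ne_top ((Ideal.eq_top_iff_one _).mpr ham)
  have hmmlt : mm < 1 := lt_of_le_of_ne hmm1 (fun he => h1mm (he ▸ one_mem_one))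
  have hcorr : ∀ P : Submodule R K, mm ≤ P → P ≤ 1 → P = mm ∨ P = 1 := by
    intro P hmP hP1
    set P' : Ideal R := P.comap (Algebra.linearMap R K) with hP'
    have hPeq : idl R K P' = P := by
      apply le_antisymm
      · intro z hz
        obtain ⟨a, ha, rfl⟩ := mem_idl.mp hz
        exact ha
      · intro z hz
        obtain ⟨a, rfl⟩ := Submodule.mem_one.mp (hP1 hz)
        exact Submodule.mem_map_of_mem (show a ∈ P' from hz)
    have hmP' : maximalIdeal R ≤ P' := fun a ha => hmP (Submodule.mem_map_of_mem ha)
    by_cases htop : P' = ⊤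
    · right
      apply le_antisymm hP1
      rw [Submodule.one_le]
      have h1 : (1 : R) ∈ P' := htop ▸ trivial
      have h2 : Algebra.linearMap R K 1 ∈ idl R K P' := Submodule.mem_map_of_mem h1
      rw [hPeq] at h2
      simpa using h2
    · left
      rw [← hPeq, ← (maximalIdeal.isMaximal R).eq_of_le htop hmP']
  have hilenmm : ilen mm (1 : Submodule R K) = 1 := by
    apply le_antisymm
    · exact ilen_le_one (fun P h1 h2 => hcorr P h1 h2)
    · exact one_le_ilen hmmlt
  -- the Cohen-Macaulay type equation: r = 1 + ilen 1 ω
  have hmmfg : mm.FG := Submodule.FG.map _ (IsNoetherian.noetherian _)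
  have h1dmm : (1 : Submodule R K) / mm = ω / mm := by
    rw [one_div_eq_dual_mul hωω, mul_comm, hAG]
  have h1le : (1 : Submodule R K) ≤ ω / mm := by
    rw [Submodule.one_le, Submodule.mem_div_iff_forall_mul_mem]
    intro y hy
    rw [one_mul]
    exact hω1 (hmm1 hy)
  have hωmmfg : (ω / mm).FG := by
    obtain ⟨b, hbm, hb0⟩ := (Submodule.ne_bot_iff mm).mp hmmbot
    exact div_fg hωfg hbm hb0
  have h1bot : (1 : Submodule R K) ≠ ⊥ :=
    (Submodule.ne_bot_iff _).mpr ⟨1, one_mem_one, one_ne_zero⟩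
  have hrdual := ilen_dual hω1 hωfg hωdual h1le h1bot hωmmfg
  rw [hωdual mm hmmbot hmmfg, div_one_eq] at hrdual
  have h1le' : (1 : Submodule R K) ≤ (1 : Submodule R K) / mm := by
    rw [h1dmm]; exact h1le
  have hr2 : (r : WithBot ℕ∞) = 1 + ilen 1 ω := by
    rw [hrty, qlen_eq_of_le h1le', h1dmm, hrdual, ilen_add hmm1 hω1, hilenmm]
  -- length of 1/J
  set S : ℕ := ∑ i ∈ Finset.range ν, L i with hSdef
  have hLi : ∀ i, (L i : WithBot ℕ∞) = ilen (Iv ^ (i+1)) (Iv ^ i) := by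
    intro i
    rw [hL i, qlen_eq_of_le (pow_succ_le hIv1 i)]
  have hchainS : ∀ n : ℕ, ilen (Iv ^ n) 1 = ((∑ i ∈ Finset.range n, L i : ℕ) : WithBot ℕ∞) := by
    intro n
    induction n with
    | zero => simp [pow_zero, ilen_self]
    | succ n ih =>
      have hle1 : Iv ^ (n+1) ≤ Iv ^ n := pow_succ_le hIv1 n
      have hle2 : Iv ^ n ≤ 1 := pow_le_one_of_le_one hIv1 n
      rw [ilen_add hle1 hle2, ih, ← hLi n, Finset.sum_range_succ]
      push_cast
      ring
  have hSJ : ilen J 1 = (S : WithBot ℕ∞) := hchainS ν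
  -- scaled chains
  have hscwJ : sc w J ≤ J := by
    have h1 : sc w J ≤ Iv * J :=
      mul_le_mul' (Submodule.span_le.mpr (Set.singleton_subset_iff.mpr hwIv)) le_rfl
    have h2 : Iv * J = Iv ^ (ν + 1) := by rw [pow_succ, mul_comm Iv J, hJdef]
    have h3 : Iv ^ (ν+1) ≤ J := pow_succ_le hIv1 ν
    calc sc w J ≤ Iv * J := h1
      _ = Iv ^ (ν+1) := h2
      _ ≤ J := h3
  have hsck : ∀ k : ℕ, sc (w ^ k) J ≤ J := by
    intro k
    induction k with
    | zero => rw [pow_zero, sc_one_left]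
    | succ k ih =>
      rw [pow_succ, ← sc_sc (w ^ k) w J]
      exact le_trans (sc_mono _ hscwJ) ih
  have hLν : ilen (sc w J) J = (L ν : WithBot ℕ∞) := by
    have e1 : Iv ^ (ν + 1) = sc w J := by
      have := hstable 1
      rwa [pow_one] at this
    rw [← e1]
    exact (hLi ν).symm
  have hνL : ∀ k : ℕ, ilen (sc (w ^ k) J) J = ((k * L ν : ℕ) : WithBot ℕ∞) := by
    intro k
    induction k with
    | zero => rw [pow_zero, sc_one_left]; simp [ilen_self]
    | succ k ih =>
      have hin1 : sc (w ^ (k+1)) J ≤ sc (w ^ k) J := by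
        rw [pow_succ, ← sc_sc (w ^ k) w J]
        exact sc_mono _ hscwJ
      rw [ilen_add hin1 (hsck k), ih]
      have hstep2 : ilen (sc (w^(k+1)) J) (sc (w^k) J) = (L ν : WithBot ℕ∞) := by
        rw [pow_succ, ← sc_sc (w ^ k) w J, ilen_sc (hwn0 k), hLν]
      rw [hstep2]
      push_cast
      ring
  -- W = sc (w^ν) 1 and ilen W J = S
  set W : Submodule R K := sc (w ^ ν) 1 with hWdef
  have hWJ : W ≤ J := by
    rw [hWdef, sc_le_iff]
    intro p hp
    obtain ⟨a, rfl⟩ := Submodule.mem_one.mp hp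
    rw [mul_comm, ← Algebra.smul_def]
    exact Submodule.smul_mem _ _ hwνJ
  have hsplit1 : ilen (sc (w^ν) J) J = ilen (sc (w^ν) J) W + ilen W J :=
    ilen_add (by rw [hWdef]; exact sc_mono _ hJ1) hWJ
  have hl1 : ilen (sc (w^ν) J) W = (S : WithBot ℕ∞) := by
    rw [hWdef, ilen_sc (hwn0 ν), hSJ]
  -- integer symmetry computation: 2S = ν * L ν
  have hLsum : ∀ i, (L i : ℤ) = ∑ j ∈ Finset.range (i+1), h j := by
    intro i
    induction i with
    | zero => simp [hh0]
    | succ i ih =>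
      rw [Finset.sum_range_succ, ← ih]
      have hh := hhi (i+1) (by omega)
      rw [show i + 1 - 1 = i from rfl] at hh
      linarith [hh]
  have hkey : ∀ i, i < ν → (L i : ℤ) + L (ν - 1 - i) = L ν := by
    intro i hi
    have e2 : ∑ j ∈ Finset.range (ν+1), h j
        = ∑ j ∈ Finset.range (i+1), h j + ∑ j ∈ Finset.Ico (i+1) (ν+1), h j := by
      rw [Finset.range_eq_Ico, Finset.range_eq_Ico,
        Finset.sum_Ico_consecutive _ (by omega : 0 ≤ i+1) (by omega : i+1 ≤ ν+1)]
    have e3 : ∑ j ∈ Finset.Ico (i+1) (ν+1), h j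
        = ∑ j ∈ Finset.Ico (i+1) (ν+1), h (ν - j) := by
      apply Finset.sum_congr rfl
      intro j hj
      rw [Finset.mem_Ico] at hj
      exact hsym j (by omega)
    have e4 : ∑ j ∈ Finset.Ico (i+1) (ν+1), h (ν - j)
        = ∑ j ∈ Finset.Ico 0 (ν - i), h j := by
      have e := Finset.sum_Ico_reflect h (i+1) (show ν + 1 ≤ ν + 1 by omega)
      rw [e, show ν + 1 - (ν + 1) = 0 by omega, show ν + 1 - (i + 1) = ν - i by omega]
    have e5 : (L (ν - 1 - i) : ℤ) = ∑ j ∈ Finset.Ico 0 (ν - i), h j := by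
      rw [hLsum (ν - 1 - i), Finset.range_eq_Ico, show ν - 1 - i + 1 = ν - i by omega]
    have e6 := hLsum ν
    have e7 := hLsum i
    rw [e6, e2, ← e7, e3, e4, ← e5]
  have h2S : 2 * (S : ℤ) = ν * L ν := by
    have hs1 : (S : ℤ) = ∑ i ∈ Finset.range ν, (L i : ℤ) := by
      rw [hSdef]; push_cast; ring
    have hs2 : (S : ℤ) = ∑ i ∈ Finset.range ν, (L (ν - 1 - i) : ℤ) := by
      rw [hs1, ← Finset.sum_range_reflect (fun i => (L i : ℤ)) ν]
    calc 2 * (S:ℤ) = ∑ i ∈ Finset.range ν, ((L i : ℤ) + L (ν-1-i)) := by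
          rw [Finset.sum_add_distrib, ← hs1, ← hs2]; ring
      _ = ∑ _i ∈ Finset.range ν, (L ν : ℤ) :=
          Finset.sum_congr rfl (fun i hi => hkey i (Finset.mem_range.mp hi))
      _ = ν * L ν := by rw [Finset.sum_const, Finset.card_range]; push_cast; ring
  have h2S' : 2 * S = ν * L ν := by exact_mod_cast h2S
  have hWJlen : ilen W J = (S : WithBot ℕ∞) := by
    have e := hνL ν
    rw [hsplit1, hl1] at e
    have e2 : ilen W J + (S : WithBot ℕ∞) = (S : WithBot ℕ∞) + (S : WithBot ℕ∞) := by
      rw [add_comm, e]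
      rw [show ((ν * L ν : ℕ) : WithBot ℕ∞) = ((2 * S : ℕ) : WithBot ℕ∞) by rw [h2S']]
      push_cast
      ring
    exact wb_cancel (ilen_nonneg hWJ) (wb_nat_nonneg S) S e2
  have hΛ1len : ilen 1 Λ = (S : WithBot ℕ∞) := by
    have h1W : (1 : Submodule R K) = sc ((w^ν)⁻¹) W := by
      rw [hWdef, sc_sc, inv_mul_cancel₀ (hwn0 ν), sc_one_left]
    rw [hΛsc, h1W, ilen_sc (inv_ne_zero (hwn0 ν)), hWJlen]
  -- the module A = ω / J
  have hωA : ω ≤ ω / J := by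
    intro z hz
    rw [Submodule.mem_div_iff_forall_mul_mem]
    intro y hy
    obtain ⟨a, rfl⟩ := Submodule.mem_one.mp (hJ1 hy)
    rw [mul_comm, ← Algebra.smul_def]
    exact Submodule.smul_mem _ _ hz
  have hAfg : (ω / J).FG := div_fg hωfg hwνJ (hwn0 ν)
  have hdual2 := ilen_dual hω1 hωfg hωdual hωA hωbot hAfg
  rw [hωdual J hJbot hJfg, hωω] at hdual2
  have h1J : (1:Submodule R K) / J ≤ ω / J := by
    intro z hz
    rw [Submodule.mem_div_iff_forall_mul_mem]
    exact fun y hy => hω1 (Submodule.mem_div_iff_forall_mul_mem.mp hz y hy)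
  have hΛ1J : Λ ≤ (1:Submodule R K) / J := by
    rw [hΛeq]
    intro z hz
    rw [Submodule.mem_div_iff_forall_mul_mem]
    exact fun y hy => hJ1 (Submodule.mem_div_iff_forall_mul_mem.mp hz y hy)
  have hΛA : Λ ≤ ω / J := le_trans hΛ1J h1J
  have eqA : ilen 1 ω + ilen ω (ω / J) = ilen 1 Λ + ilen Λ (ω / J) := by
    rw [← ilen_add hω1 hωA, ← ilen_add h1Λ hΛA]
  have hΛAlen : ilen 1 ω = ilen Λ (ω / J) := by
    rw [hdual2, hSJ, hΛ1len] at eqA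
    refine wb_cancel (ilen_nonneg hω1) (ilen_nonneg hΛA) S ?_
    rw [eqA, add_comm]
  have hrΛ : (r : WithBot ℕ∞) = 1 + ilen Λ (ω / J) := by rw [hr2, hΛAlen]
  -- ℓ₁ = ilen Λ (1/J)
  have hJ1Λ : J ≤ (1:Submodule R K)/Λ := by
    intro z hz
    rw [Submodule.mem_div_iff_forall_mul_mem]
    intro y hy
    rw [hΛeq] at hy
    have h2 := Submodule.mem_div_iff_forall_mul_mem.mp hy z hz
    rw [mul_comm]
    exact hJ1 h2
  have hT : (ℓ₁ : WithBot ℕ∞) = ilen Λ ((1:Submodule R K)/J) := by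
    have e1 : ilen Λ ((1:Submodule R K)/J)
        = ilen (sc (w^ν) Λ) (sc (w^ν) ((1:Submodule R K)/J)) := (ilen_sc (hwn0 ν) _ _).symm
    rw [hℓ₁, qlen_eq_of_le hJ1Λ, e1, hscJ, ← hdivΛ]
  have hsplit2 : ilen Λ (ω / J) = ilen Λ ((1:Submodule R K)/J) + ilen ((1:Submodule R K)/J) (ω / J) :=
    ilen_add hΛ1J h1J
  have hrfinal : (r : WithBot ℕ∞) = ((1 + ℓ₁ : ℕ) : WithBot ℕ∞) + ilen ((1:Submodule R K)/J) (ω / J) := by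
    rw [hrΛ, hsplit2, ← add_assoc, ← hT]
    push_cast
    ring_nf
  obtain ⟨d, hd, hrd⟩ := wb_decompose (ilen_nonneg h1J) hrfinal
  -- the key equivalence
  have hiff : ((1:Submodule R K)/J = ω / J) ↔
      (Λ = (1:Submodule R K) / ((1:Submodule R K) / Λ)) := by
    constructor
    · intro hEq
      have hscale : (1:Submodule R K)/Λ = ω/Λ := by rw [hdivΛ, hωdivΛ, hEq]
      have hωΛfg : (ω * Λ).FG := hωfg.mul hΛfg
      have hωΛbot : ω * Λ ≠ ⊥ := by
        apply (Submodule.ne_bot_iff _).mpr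
        refine ⟨1, ?_, one_ne_zero⟩
        have := Submodule.mul_mem_mul (hω1 one_mem_one) (h1Λ one_mem_one)
        rwa [mul_one] at this
      have hωΛ : ω * Λ = Λ := by
        have e1 : ω / (ω * Λ) = ω / Λ := by rw [← one_div_eq_dual_mul hωω, hscale]
        have e2 := hωdual (ω * Λ) hωΛbot hωΛfg
        rw [e1, hωdual Λ hΛbot hΛfg] at e2
        exact e2.symm
      have hωsub : ω ≤ Λ := by
        intro z hz
        have h2 := Submodule.mul_mem_mul hz (h1Λ one_mem_one)
        rwa [mul_one, hωΛ] at h2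
      have hdd : ω * (ω / Λ) = ω / Λ := by
        apply le_antisymm
        · refine Submodule.mul_le.mpr (fun o ho d' hd' => ?_)
          rw [Submodule.mem_div_iff_forall_mul_mem]
          intro y hy
          have h1 : o * y ∈ Λ := hΛmul o (hωsub ho) y hy
          have h2 := Submodule.mem_div_iff_forall_mul_mem.mp hd' _ h1
          rwa [show o * d' * y = d' * (o * y) by ring]
        · intro d' hd'
          have h2 := Submodule.mul_mem_mul (hω1 one_mem_one) hd'
          rwa [one_mul] at h2
      rw [hscale, one_div_eq_dual_mul hωω (ω / Λ), hdd, hωdual Λ hΛbot hΛfg]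
    · intro hrefl
      have hΛne1 : Λ ≠ (1 : Submodule R K) := by
        intro hΛ1
        apply hInp
        have hJW : J = W := by rw [← hscJ, hΛ1, hWdef]
        have e1 : Iv ^ (ν + 1) = sc w J := by
          have := hstable 1
          rwa [pow_one] at this
        have e2 : Iv ^ (ν + 1) = sc (w ^ ν) Iv := by
          rw [pow_succ, hJdef.symm, hJW, hWdef, sc, sc, mul_assoc, one_mul]
        have e3 : sc w J = sc (w^ν) (sc w 1) := by
          rw [hJW, hWdef, sc_sc, sc_sc, mul_comm w (w ^ ν)]
        have e5 : sc (w^ν) Iv = sc (w^ν) (sc w 1) := by rw [← e2, e1, e3]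
        have e6 := congrArg (sc ((w^ν)⁻¹)) e5
        rw [sc_sc, sc_sc, inv_mul_cancel₀ (hwn0 ν), sc_one_left, sc_one_left] at e6
        have e7 : Iv = Submodule.span R {w} := by rw [e6, sc, mul_one]
        refine ⟨⟨x, ?_⟩⟩
        show I = Ideal.span {x}
        apply idl_inj (K := K)
        rw [idl_span_singleton, ← hwdef, ← e7, hIvdef]
      have hΛsub1 : (1:Submodule R K)/Λ ≤ 1 := by
        intro z hz
        have h2 := Submodule.mem_div_iff_forall_mul_mem.mp hz 1 (h1Λ one_mem_one)
        rwa [mul_one] at h2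
      have hnot1 : (1:K) ∉ (1:Submodule R K)/Λ := by
        intro h1
        apply hΛne1
        apply le_antisymm ?_ h1Λ
        intro y hy
        have h2 := Submodule.mem_div_iff_forall_mul_mem.mp h1 y hy
        rwa [one_mul] at h2
      have hsubmm : (1:Submodule R K)/Λ ≤ mm := by
        intro z hz
        obtain ⟨a, rfl⟩ := Submodule.mem_one.mp (hΛsub1 hz)
        by_cases ham : a ∈ maximalIdeal R
        · exact Submodule.mem_map_of_mem ham
        · exfalso
          obtain ⟨u, rfl⟩ := IsLocalRing.notMem_maximalIdeal.mp ham
          apply hnot1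
          have h2 := Submodule.smul_mem _ ((u⁻¹ : Rˣ) : R) hz
          rwa [Algebra.smul_def, ← map_mul, Units.inv_mul, map_one] at h2
      have hω1Λ : ω * ((1:Submodule R K)/Λ) ≤ 1 := by
        calc ω * ((1:Submodule R K)/Λ) ≤ ω * mm := mul_le_mul' le_rfl hsubmm
          _ = mm := by rw [mul_comm, hAG]
          _ ≤ 1 := hmm1
      have hte : ω * Λ ≤ (1:Submodule R K)/((1:Submodule R K)/Λ) := by
        refine Submodule.mul_le.mpr (fun z hz l hl => ?_)
        rw [Submodule.mem_div_iff_forall_mul_mem]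
        intro u hu
        have hlu : l * u ∈ (1:Submodule R K)/Λ := by
          rw [Submodule.mem_div_iff_forall_mul_mem]
          intro l' hl'
          have h1 : l * l' ∈ Λ := hΛmul l hl l' hl'
          have h2 := Submodule.mem_div_iff_forall_mul_mem.mp hu _ h1
          rwa [show l * u * l' = u * (l * l') by ring]
        have h3 := Submodule.mul_mem_mul hz hlu
        have h4 := hω1Λ h3
        rwa [show z * (l * u) = z * l * u by ring] at h4
      have hωΛle : ω * Λ ≤ Λ := hte.trans (le_of_eq hrefl.symm)
      have hωΛ : ω * Λ = Λ := le_antisymm hωΛle (by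
        intro l hl
        have h2 := Submodule.mul_mem_mul (hω1 one_mem_one) hl
        rwa [one_mul] at h2)
      have e1 : (1:Submodule R K)/Λ = ω/Λ := by
        rw [one_div_eq_dual_mul hωω Λ, hωΛ]
      rw [hdivΛ, hωdivΛ] at e1
      have e2 := congrArg (sc ((w^ν)⁻¹)) e1
      rwa [sc_sc, sc_sc, inv_mul_cancel₀ (hwn0 ν), sc_one_left, sc_one_left] at e2
  -- final arithmetic
  constructor
  · omega
  · constructor
    · intro heq
      have hd0 : d = 0 := by omega
      rw [hd0] at hd
      have hzero : ilen ((1:Submodule R K)/J) (ω / J) = 0 := by exact_mod_cast hd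
      exact hiff.mp ((ilen_eq_zero_iff h1J).mp hzero)
    · intro hrefl
      have hEq := hiff.mpr hrefl
      have hzero : ilen ((1:Submodule R K)/J) (ω / J) = 0 := by
        rw [hEq]
        exact ilen_self _
      rw [hzero] at hd
      have hd0 : d = 0 := by exact_mod_cast hd.symm
      omega
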